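/- Consider $p = P(X \geq \gamma \text{ or } X \leq -k\gamma)$ with $X \sim N(0,1)$ and constant $1 < k < 3$, estimated by IS with distribution $N(\gamma,1)$. Then $\tilde E(Z^2)/p^2$ grows exponentially in $\gamma^2$ (specifically, like $e^{(3-k)(k+1)\gamma^2/2}$ up to polynomial factors), so the estimator is not asymptotically efficient. -/

import Mathlib

open MeasureTheory Real Set Filter

/-- Standard normal tail function. -/
noncomputable def PhiBar (x : ℝ) : ℝ :=
  ∫ t in Ici x, (Real.sqrt (2 * π))⁻¹ * Real.exp (-t ^ 2 / 2)

/-- Second moment of the one-point IS estimator for `P(X ≥ γ or X ≤ -kγ)`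
under the IS distribution `N(γ,1)`. -/
noncomputable def secondMoment (k γ : ℝ) : ℝ :=
  ∫ x in {x : ℝ | γ ≤ x ∨ x ≤ -k * γ},
    (Real.exp (-γ * x + γ ^ 2 / 2)) ^ 2 *
      ((Real.sqrt (2 * π))⁻¹ * Real.exp (-(x - γ) ^ 2 / 2))

/-! The Mills-ratio bounds `e^{-3/2} φ(x)/x ≤ Φ̄(x) ≤ φ(x)/x` (for `x ≥ 1`) reduce everything to
Gaussian densities. Completing the square, `Ẽ(Z²) = e^{γ²} (Φ̄(2γ) + Φ̄((k-1)γ))`, and since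
`k - 1 ≤ 2` the second tail dominates, so `Ẽ(Z²) ≍ e^{γ²} φ((k-1)γ)/γ` while `p ≍ φ(γ)/γ`.
Dividing, `Ẽ(Z²)/p² ≍ γ e^{(2 - (k-1)²/2) γ²}` and `2 - (k-1)²/2 = (3-k)(k+1)/2 > 0`. Hence
`log (Ẽ(Z²)/p²) ≥ c γ²` with `c > 0`, whereas `-log p ≤ γ²`. -/

open ProbabilityTheory Topology

local notation "φ" => gaussianPDFReal 0 1

lemma gaussianPDFReal_zero_one (x : ℝ) : φ x = (√(2 * π))⁻¹ * exp (-x ^ 2 / 2) := by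
  simp [gaussianPDFReal]

lemma gaussianPDFReal_zero_one_neg (x : ℝ) : φ (-x) = φ x := by
  simp only [gaussianPDFReal_zero_one, neg_sq]

lemma gaussianPDFReal_zero_one_le_one (x : ℝ) : φ x ≤ 1 := by
  rw [gaussianPDFReal_zero_one]
  have h2π : 1 ≤ √(2 * π) := Real.one_le_sqrt.mpr (by linarith [pi_gt_three])
  have hexp : exp (-x ^ 2 / 2) ≤ 1 := exp_le_one_iff.mpr (by nlinarith [sq_nonneg x])
  calc (√(2 * π))⁻¹ * exp (-x ^ 2 / 2) ≤ 1 * 1 :=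
        mul_le_mul (inv_le_one_of_one_le₀ h2π) hexp (exp_pos _).le zero_le_one
    _ = 1 := one_mul 1

lemma hasDerivAt_gaussianPDFReal_zero_one (x : ℝ) : HasDerivAt φ (-x * φ x) x := by
  have h : HasDerivAt (fun t : ℝ => -t ^ 2 / 2) (-x) x :=
    ((hasDerivAt_pow 2 x).neg.div_const 2).congr_deriv (by ring)
  rw [funext gaussianPDFReal_zero_one]
  exact (h.exp.const_mul _).congr_deriv (by ring)

lemma tendsto_gaussianPDFReal_zero_one_atTop : Tendsto φ atTop (𝓝 0) := by
  have h : Tendsto (fun t : ℝ => -t ^ 2 / 2) atTop atBot :=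
    (tendsto_neg_atTop_atBot.comp (tendsto_pow_atTop two_ne_zero)).atBot_div_const two_pos
  rw [funext gaussianPDFReal_zero_one, ← mul_zero (√(2 * π))⁻¹]
  exact (tendsto_exp_atBot.comp h).const_mul _

lemma integrable_mul_gaussianPDFReal_zero_one : Integrable fun x => x * φ x := by
  have := (integrable_mul_exp_neg_mul_sq (b := 1 / 2) one_half_pos).const_mul (√(2 * π))⁻¹
  refine this.congr (ae_of_all _ fun x => ?_)
  simp only [gaussianPDFReal_zero_one]
  ring_nf

lemma integral_Ioi_mul_gaussianPDFReal_zero_one (x : ℝ) : ∫ t in Ioi x, t * φ t = φ x := by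
  have h := integral_Ioi_of_hasDerivAt_of_tendsto' (f := fun t => -φ t) (a := x)
    (fun t _ => (hasDerivAt_gaussianPDFReal_zero_one t).neg)
    (integrable_mul_gaussianPDFReal_zero_one.integrableOn.congr_fun (fun t _ => by ring)
      measurableSet_Ioi)
    (by simpa using tendsto_gaussianPDFReal_zero_one_atTop.neg)
  simpa using h

lemma gaussianPDFReal_zero_one_antitoneOn : AntitoneOn φ (Ici 0) := by
  intro s hs t _ hst
  simp only [gaussianPDFReal_zero_one]
  gcongr

lemma gaussianPDFReal_zero_one_add_inv (x : ℝ) (hx : x ≠ 0) :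
    φ (x + x⁻¹) = exp (-1 - x⁻¹ ^ 2 / 2) * φ x := by
  simp only [gaussianPDFReal_zero_one]
  rw [mul_left_comm, ← exp_add]
  congr 2
  field_simp
  ring

lemma PhiBar_eq_setIntegral (x : ℝ) : PhiBar x = ∫ t in Ici x, φ t := by
  simp only [PhiBar, gaussianPDFReal_zero_one]

lemma PhiBar_nonneg (x : ℝ) : 0 ≤ PhiBar x := by
  rw [PhiBar_eq_setIntegral]
  exact setIntegral_nonneg measurableSet_Ici fun t _ => gaussianPDFReal_nonneg 0 1 t

lemma PhiBar_antitone : Antitone PhiBar := by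
  intro x y hxy
  simp only [PhiBar_eq_setIntegral]
  exact setIntegral_mono_set (integrable_gaussianPDFReal 0 1).integrableOn
    (ae_of_all _ fun t => gaussianPDFReal_nonneg 0 1 t) (Ici_subset_Ici.mpr hxy).eventuallyLE

lemma setIntegral_Iic_gaussianPDFReal_zero_one (c : ℝ) : ∫ t in Iic c, φ t = PhiBar (-c) := by
  rw [PhiBar_eq_setIntegral, integral_Ici_eq_integral_Ioi, ← integral_comp_neg_Iic]
  simp only [gaussianPDFReal_zero_one_neg]

lemma PhiBar_le_div {x : ℝ} (hx : 0 < x) : PhiBar x ≤ φ x / x := by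
  have hint : IntegrableOn (fun t => t / x * φ t) (Ioi x) :=
    (integrable_mul_gaussianPDFReal_zero_one.div_const x).integrableOn.congr_fun
      (fun t _ => by ring) measurableSet_Ioi
  calc PhiBar x = ∫ t in Ioi x, φ t := by
        rw [PhiBar_eq_setIntegral, integral_Ici_eq_integral_Ioi]
    _ ≤ ∫ t in Ioi x, t / x * φ t := by
        refine setIntegral_mono_on (integrable_gaussianPDFReal 0 1).integrableOn hint
          measurableSet_Ioi fun t ht => ?_
        have : 1 ≤ t / x := (one_le_div hx).mpr (le_of_lt ht)
        nlinarith [gaussianPDFReal_nonneg 0 1 t]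
    _ = φ x / x := by
        simp_rw [div_mul_eq_mul_div, integral_div, integral_Ioi_mul_gaussianPDFReal_zero_one]

/- On `[x, x + 1/x]` the density is at least `φ(x + 1/x) = e^{-1 - 1/(2x²)} φ(x)`. -/
lemma exp_neg_three_halves_mul_le_PhiBar {x : ℝ} (hx : 1 ≤ x) :
    exp (-3 / 2) * (φ x / x) ≤ PhiBar x := by
  have hx0 : 0 < x := zero_lt_one.trans_le hx
  have hinv : x⁻¹ ≤ 1 := inv_le_one_of_one_le₀ hx
  calc exp (-3 / 2) * (φ x / x) ≤ φ (x + x⁻¹) * x⁻¹ := by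
        rw [gaussianPDFReal_zero_one_add_inv x hx0.ne', mul_div_assoc', ← div_eq_mul_inv]
        gcongr
        · exact gaussianPDFReal_nonneg 0 1 x
        · nlinarith [inv_pos.mpr hx0]
    _ ≤ ∫ t in Icc x (x + x⁻¹), φ t := by
        refine (setIntegral_ge_of_const_le_real measurableSet_Icc (by simp)
          (fun t ht => gaussianPDFReal_zero_one_antitoneOn (hx0.le.trans ht.1)
            (by simp only [mem_Ici]; positivity) ht.2)
          (integrable_gaussianPDFReal 0 1).integrableOn).trans_eq' ?_
        simp [hx0.le]
    _ ≤ PhiBar x := by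
        rw [PhiBar_eq_setIntegral]
        exact setIntegral_mono_set (integrable_gaussianPDFReal 0 1).integrableOn
          (ae_of_all _ fun t => gaussianPDFReal_nonneg 0 1 t) (Icc_subset_Ici_self).eventuallyLE

lemma setIntegral_comp_add_right (f : ℝ → ℝ) (a : ℝ) (s : Set ℝ) :
    ∫ x in (· + a) ⁻¹' s, f (x + a) = ∫ x in s, f x :=
  (measurePreserving_add_right volume a).setIntegral_preimage_emb
    (measurableEmbedding_addRight a) f s

lemma secondMoment_integrand_eq (γ x : ℝ) :
    exp (-γ * x + γ ^ 2 / 2) ^ 2 * ((√(2 * π))⁻¹ * exp (-(x - γ) ^ 2 / 2))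
      = exp (γ ^ 2) * φ (x + γ) := by
  rw [gaussianPDFReal_zero_one, ← exp_nat_mul, mul_left_comm, ← exp_add, mul_left_comm,
    ← exp_add]
  ring_nf

lemma secondMoment_eq {k γ : ℝ} (h : -k * γ < γ) :
    secondMoment k γ = exp (γ ^ 2) * (PhiBar (2 * γ) + PhiBar ((k - 1) * γ)) := by
  have hright : ∫ x in Ici γ, φ (x + γ) = PhiBar (2 * γ) := by
    rw [show Ici γ = (· + γ) ⁻¹' Ici (2 * γ) by rw [preimage_add_const_Ici]; ring_nf,
      setIntegral_comp_add_right, PhiBar_eq_setIntegral]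
  have hleft : ∫ x in Iic (-k * γ), φ (x + γ) = PhiBar ((k - 1) * γ) := by
    rw [show Iic (-k * γ) = (· + γ) ⁻¹' Iic ((1 - k) * γ) by rw [preimage_add_const_Iic]; ring_nf,
      setIntegral_comp_add_right, setIntegral_Iic_gaussianPDFReal_zero_one]
    ring_nf
  have hunion : {x : ℝ | γ ≤ x ∨ x ≤ -k * γ} = Ici γ ∪ Iic (-k * γ) := rfl
  have hint : Integrable fun x => exp (γ ^ 2) * φ (x + γ) :=
    ((integrable_gaussianPDFReal 0 1).comp_add_right γ).const_mul _
  rw [secondMoment, hunion, setIntegral_congr_fun (by measurability)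
      fun x _ => secondMoment_integrand_eq γ x,
    setIntegral_union (Iic_disjoint_Ici.mpr (not_le.mpr h)).symm measurableSet_Iic
      hint.integrableOn hint.integrableOn,
    integral_const_mul, integral_const_mul, hright, hleft, mul_add]

lemma PhiBar_add_PhiBar_le {a b : ℝ} (ha : 0 < a) (hab : a ≤ b) :
    PhiBar a + PhiBar b ≤ 2 * (φ a / a) := by
  linarith [PhiBar_antitone hab, PhiBar_le_div ha]

lemma le_PhiBar_add_PhiBar {a : ℝ} (ha : 1 ≤ a) (b : ℝ) :
    exp (-3 / 2) * (φ a / a) ≤ PhiBar a + PhiBar b := by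
  linarith [exp_neg_three_halves_mul_le_PhiBar ha, PhiBar_nonneg b]

lemma exp_sq_mul_div_sq_eq (k : ℝ) {γ : ℝ} (hγ : γ ≠ 0) :
    exp (γ ^ 2) * (φ ((k - 1) * γ) / ((k - 1) * γ)) / (φ γ / γ) ^ 2
      = √(2 * π) / (k - 1) * (γ * exp ((3 - k) * (k + 1) * γ ^ 2 / 2)) := by
  simp only [gaussianPDFReal_zero_one]
  field_simp
  rw [← exp_nat_mul, ← exp_add, ← exp_add]
  ring_nf

lemma secondMoment_div_sq_mem_Icc {k γ : ℝ} (hk : k ≤ 3) (hγ : 1 ≤ γ)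
    (hkγ : 1 ≤ (k - 1) * γ) :
    secondMoment k γ / (PhiBar γ + PhiBar (k * γ)) ^ 2 ∈ Icc
      (exp (-3 / 2) / 4 * (exp (γ ^ 2) * (φ ((k - 1) * γ) / ((k - 1) * γ)) / (φ γ / γ) ^ 2))
      (2 / exp (-3 / 2) ^ 2 *
        (exp (γ ^ 2) * (φ ((k - 1) * γ) / ((k - 1) * γ)) / (φ γ / γ) ^ 2)) := by
  have hγ0 : 0 < γ := zero_lt_one.trans_le hγ
  have hkγ0 : 0 < (k - 1) * γ := zero_lt_one.trans_le hkγ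
  have hk1 : 1 < k := by nlinarith
  set c := exp (-3 / 2)
  set A := φ ((k - 1) * γ) / ((k - 1) * γ)
  set B := φ γ / γ
  have hA : 0 < A := div_pos (gaussianPDFReal_pos 0 1 _ one_ne_zero) hkγ0
  have hB : 0 < B := div_pos (gaussianPDFReal_pos 0 1 _ one_ne_zero) hγ0
  have hS_lo : c * A ≤ PhiBar (2 * γ) + PhiBar ((k - 1) * γ) :=
    add_comm (PhiBar _) _ ▸ le_PhiBar_add_PhiBar hkγ _
  -- `(k - 1) γ ≤ 2 γ`: the tail `Φ̄((k-1)γ)` dominates, which is where `k ≤ 3` enters.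
  have hS_hi : PhiBar (2 * γ) + PhiBar ((k - 1) * γ) ≤ 2 * A :=
    add_comm (PhiBar _) _ ▸ PhiBar_add_PhiBar_le hkγ0 (by nlinarith)
  have hp_lo : c * B ≤ PhiBar γ + PhiBar (k * γ) := le_PhiBar_add_PhiBar hγ _
  have hp_hi : PhiBar γ + PhiBar (k * γ) ≤ 2 * B := PhiBar_add_PhiBar_le hγ0 (by nlinarith)
  set S := PhiBar (2 * γ) + PhiBar ((k - 1) * γ)
  set p := PhiBar γ + PhiBar (k * γ)
  have hS : 0 ≤ S := (mul_pos (exp_pos _) hA).le.trans hS_lo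
  have hp : 0 < p := (mul_pos (exp_pos _) hB).trans_le hp_lo
  rw [secondMoment_eq (by nlinarith)]
  constructor
  · calc c / 4 * (exp (γ ^ 2) * A / B ^ 2) = exp (γ ^ 2) * (c * A) / (2 * B) ^ 2 := by ring
      _ ≤ _ := by gcongr
  · calc _ ≤ exp (γ ^ 2) * (2 * A) / (c * B) ^ 2 := by gcongr
      _ = 2 / c ^ 2 * (exp (γ ^ 2) * A / B ^ 2) := by field_simp

lemma exists_bounds_secondMoment_div_sq {k : ℝ} (hk1 : 1 < k) (hk3 : k ≤ 3) :
    ∃ c₁ c₂ : ℝ, 0 < c₁ ∧ 0 < c₂ ∧ ∀ᶠ γ in atTop,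
      c₁ * (γ * exp ((3 - k) * (k + 1) * γ ^ 2 / 2)) ≤
          secondMoment k γ / (PhiBar γ + PhiBar (k * γ)) ^ 2 ∧
      secondMoment k γ / (PhiBar γ + PhiBar (k * γ)) ^ 2 ≤
          c₂ * (γ * exp ((3 - k) * (k + 1) * γ ^ 2 / 2)) := by
  have hk : 0 < k - 1 := sub_pos.mpr hk1
  refine ⟨exp (-3 / 2) / 4 * (√(2 * π) / (k - 1)), 2 / exp (-3 / 2) ^ 2 * (√(2 * π) / (k - 1)),
    by positivity, by positivity, ?_⟩
  filter_upwards [eventually_ge_atTop 1, eventually_ge_atTop (k - 1)⁻¹] with γ hγ hγk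
  have hkγ : 1 ≤ (k - 1) * γ := by rwa [← inv_mul_le_iff₀ hk, mul_one]
  have h := secondMoment_div_sq_mem_Icc hk3 hγ hkγ
  rw [exp_sq_mul_div_sq_eq k (zero_lt_one.trans_le hγ).ne'] at h
  simpa only [mem_Icc, mul_assoc] using h

lemma eventually_exp_neg_sq_le_PhiBar : ∀ᶠ x in atTop, exp (-x ^ 2) ≤ PhiBar x := by
  have hlim : Tendsto (fun x : ℝ => x * exp (-x ^ 2 / 2)) atTop (𝓝 0) := by
    refine ((tendsto_rpow_abs_mul_exp_neg_mul_sq_cocompact one_half_pos 1).mono_left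
      atTop_le_cocompact).congr' ?_
    filter_upwards [eventually_ge_atTop 0] with x hx
    rw [rpow_one, abs_of_nonneg hx]
    ring_nf
  have hc : 0 < exp (-3 / 2) * (√(2 * π))⁻¹ := by positivity
  filter_upwards [hlim.eventually (ge_mem_nhds hc), eventually_ge_atTop 1] with x hsmall hx
  refine le_trans ?_ (exp_neg_three_halves_mul_le_PhiBar hx)
  have hsplit : exp (-x ^ 2) = exp (-x ^ 2 / 2) * exp (-x ^ 2 / 2) := by
    rw [← exp_add]; ring_nf
  rw [gaussianPDFReal_zero_one, mul_div_assoc', ← mul_assoc, le_div_iff₀ (by linarith), hsplit]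
  calc exp (-x ^ 2 / 2) * exp (-x ^ 2 / 2) * x = exp (-x ^ 2 / 2) * (x * exp (-x ^ 2 / 2)) := by
        ring
    _ ≤ exp (-x ^ 2 / 2) * (exp (-3 / 2) * (√(2 * π))⁻¹) := by gcongr
    _ = _ := mul_comm _ _

lemma eventually_neg_log_PhiBar_add_pos_and_le_sq {k : ℝ} (hk : 1 ≤ k) :
    ∀ᶠ γ in atTop, 0 < -log (PhiBar γ + PhiBar (k * γ)) ∧
      -log (PhiBar γ + PhiBar (k * γ)) ≤ γ ^ 2 := by
  filter_upwards [eventually_exp_neg_sq_le_PhiBar, eventually_gt_atTop 2] with γ hexp hγ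
  have hγ0 : 0 < γ := by linarith
  have hp_lo : exp (-γ ^ 2) ≤ PhiBar γ + PhiBar (k * γ) := by
    linarith [PhiBar_nonneg (k * γ)]
  have hp_pos : 0 < PhiBar γ + PhiBar (k * γ) := (exp_pos _).trans_le hp_lo
  have hp_lt : PhiBar γ + PhiBar (k * γ) < 1 := by
    calc PhiBar γ + PhiBar (k * γ) ≤ 2 * (φ γ / γ) := PhiBar_add_PhiBar_le hγ0 (by nlinarith)
      _ ≤ 2 * (1 / γ) := by gcongr; exact gaussianPDFReal_zero_one_le_one γ
      _ < 1 := by rw [mul_one_div, div_lt_one hγ0]; exact hγ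
  constructor
  · exact neg_pos.mpr (log_neg hp_pos hp_lt)
  · rw [neg_le]
    exact (le_log_iff_exp_le hp_pos).mpr hp_lo

lemma not_tendsto_div_nhds_zero_of_sq_le {f g : ℝ → ℝ} {E : ℝ} (hE : 0 < E)
    (hf : ∀ᶠ x in atTop, E * x ^ 2 ≤ f x) (hg : ∀ᶠ x in atTop, 0 < g x ∧ g x ≤ x ^ 2) :
    ¬Tendsto (fun x => f x / g x) atTop (𝓝 0) := by
  intro h
  obtain ⟨x, hfx, ⟨hg0, hgx⟩, hlt⟩ := (hf.and (hg.and (h.eventually (gt_mem_nhds hE)))).exists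
  rw [div_lt_iff₀ hg0] at hlt
  nlinarith

lemma eventually_div_two_mul_sq_le_log {R : ℝ → ℝ} {a c : ℝ} (hc : 0 < c)
    (h : ∀ᶠ x in atTop, c * (x * exp (a * x ^ 2 / 2)) ≤ R x) :
    ∀ᶠ x in atTop, a / 2 * x ^ 2 ≤ log (R x) := by
  filter_upwards [h, eventually_ge_atTop c⁻¹] with x hR hx
  have hx0 : 0 < x := (inv_pos.mpr hc).trans_le hx
  have hcx : 1 ≤ c * x := by rwa [← inv_mul_le_iff₀ hc, mul_one]
  rw [le_log_iff_exp_le ((by positivity : (0 : ℝ) < _).trans_le hR)]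
  calc exp (a / 2 * x ^ 2) = 1 * exp (a * x ^ 2 / 2) := by ring_nf
    _ ≤ c * x * exp (a * x ^ 2 / 2) := by gcongr
    _ ≤ R x := by rw [mul_assoc]; exact hR

/-- for `1 < k < 3`, the relative second moment `Ẽ(Z²)/p²` grows
exponentially in `γ²`, like `γ e^{(3-k)(k+1)γ²/2}` up to constants, so the
one-point IS estimator is not asymptotically efficient (the ratio
`log(Ẽ(Z²)/p²)/(-log p)` does not tend to 0). -/
theorem IS_not_efficient_for_k_lt_three (k : ℝ) (hk1 : 1 < k) (hk3 : k < 3) :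
    (∃ c₁ c₂ : ℝ, 0 < c₁ ∧ 0 < c₂ ∧ ∀ᶠ γ in atTop,
      c₁ * (γ * Real.exp ((3 - k) * (k + 1) * γ ^ 2 / 2)) ≤
          secondMoment k γ / (PhiBar γ + PhiBar (k * γ)) ^ 2 ∧
      secondMoment k γ / (PhiBar γ + PhiBar (k * γ)) ^ 2 ≤
          c₂ * (γ * Real.exp ((3 - k) * (k + 1) * γ ^ 2 / 2))) ∧
    ¬ Tendsto (fun γ =>
        Real.log (secondMoment k γ / (PhiBar γ + PhiBar (k * γ)) ^ 2) /
          (-Real.log (PhiBar γ + PhiBar (k * γ)))) atTop (nhds 0) := by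
  obtain ⟨c₁, c₂, hc₁, hc₂, hbounds⟩ := exists_bounds_secondMoment_div_sq hk1 hk3.le
  refine ⟨⟨c₁, c₂, hc₁, hc₂, hbounds⟩, ?_⟩
  have hE : 0 < (3 - k) * (k + 1) / 2 := by nlinarith
  exact not_tendsto_div_nhds_zero_of_sq_le hE
    (eventually_div_two_mul_sq_le_log hc₁ (hbounds.mono fun _ h => h.1))
    (eventually_neg_log_PhiBar_add_pos_and_le_sq hk1.le)
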